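/- arXiv:2406.00826 — 3 statements merged into one kernel-verified Lean document; each statement's English description precedes it below -/
import Mathlib

section
/- Let K' = K/(1-ρ) > 0 with 0 < ρ < 1, K > 0, τ ≥ 0, and let v be a real number with v < log(1/(1-ρ)). Then exp(v) - τ·K' < exp(v - τ·K). -/
/-- Comparison of the discrete expected-decrease thresholds for a RASM vs a logRASM:
with `K' = K/(1-ρ)`, `0 < ρ < 1`, `K > 0`, `τ > 0` and `v < log (1/(1-ρ))`,
we have `exp v - τ·K' < exp (v - τ·K)`. -/
theorem stmt_0 (ρ K τ v : ℝ) (hρ0 : 0 < ρ) (hρ1 : ρ < 1) (hK : 0 < K) (hτ : 0 < τ)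
    (hv : v < Real.log (1 / (1 - ρ))) :
    Real.exp v - τ * (K / (1 - ρ)) < Real.exp (v - τ * K) := by
  have h1ρ : 0 < 1 - ρ := by linarith
  have hev : Real.exp v < 1 / (1 - ρ) := by
    have := Real.exp_lt_exp.mpr hv
    rwa [Real.exp_log (by positivity)] at this
  have hne : -(τ * K) ≠ 0 := neg_ne_zero.mpr (by positivity)
  have h2 : 1 - τ * K < Real.exp (-(τ * K)) := by
    have := Real.add_one_lt_exp hne
    linarith
  have h3 : Real.exp v * (1 - Real.exp (-(τ * K))) < (1 / (1 - ρ)) * (τ * K) := by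
    have hpos : 0 < 1 - Real.exp (-(τ * K)) := by
      have : Real.exp (-(τ * K)) < 1 := by
        rw [Real.exp_lt_one_iff]; nlinarith
      linarith
    calc Real.exp v * (1 - Real.exp (-(τ * K)))
        < (1 / (1 - ρ)) * (1 - Real.exp (-(τ * K))) := by
          exact mul_lt_mul_of_pos_right hev hpos
      _ ≤ (1 / (1 - ρ)) * (τ * K) := by
          apply mul_le_mul_of_nonneg_left (by linarith) (by positivity)
  have h4 : Real.exp (v - τ * K) = Real.exp v * Real.exp (-(τ * K)) := by
    rw [← Real.exp_add]; ring_nf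
  rw [h4]
  have : τ * (K / (1 - ρ)) = (1 / (1 - ρ)) * (τ * K) := by ring
  nlinarith [h3]
end

section
/- Let weights w_i^ℓ > 0 for the output space of a matrix A ∈ ℝ^{m_ℓ × m_{ℓ-1}} be given, with column sums s_j = Σ_{i=1}^{m_ℓ} w_i^ℓ |A_{ij}| all positive. Define K = max_j s_j and input weights w_j^{ℓ-1} = s_j / K. Then: (a) max_j w_j^{ℓ-1} = 1; (b) the weighted operator norm of A from (ℝ^{m_{ℓ-1}}, Σ_j w_j^{ℓ-1}|x_j|) to (ℝ^{m_ℓ}, Σ_i w_i^ℓ|y_i|) equals K; and (c) for any other positive input weights w̃^0 one has ‖A‖_{w̃} · w̃_j ≥ K · w_j^{ℓ-1} = s_j for every j, where ‖A‖_{w̃} is the operator norm with input norm Σ_j w̃_j|x_j| and the same output norm. -/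
/-- The weighted 1-norm `‖x‖ = Σ_i w_i |x_i|`. -/
def wnorm {m : ℕ} (w : Fin m → ℝ) (x : Fin m → ℝ) : ℝ := ∑ i, w i * |x i|

/-- The operator norm of a matrix between weighted-1-normed spaces, defined as the
supremum of `‖Mx‖ / ‖x‖` over nonzero `x`. -/
noncomputable def opNormW {mk ml : ℕ} (wk : Fin mk → ℝ) (wl : Fin ml → ℝ)
    (M : Matrix (Fin ml) (Fin mk) ℝ) : ℝ :=
  sSup {r : ℝ | ∃ x : Fin mk → ℝ, x ≠ 0 ∧ r = wnorm wl (M.mulVec x) / wnorm wk x}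

/-- The output of the feed-forward network after `n` layers: `x_0 = x` and
`x_k = R_{k-1}(A_{k-1} x_{k-1} + b_{k-1})`, where `R ℓ` is the (scalar, applied
componentwise) activation function of layer `ℓ+1`. -/
noncomputable def netOut (m : ℕ → ℕ)
    (A : ∀ ℓ : ℕ, Matrix (Fin (m (ℓ + 1))) (Fin (m ℓ)) ℝ)
    (b : ∀ ℓ : ℕ, Fin (m (ℓ + 1)) → ℝ) (R : ℕ → ℝ → ℝ) :
    (n : ℕ) → (Fin (m 0) → ℝ) → Fin (m n) → ℝ
  | 0, x => x
  | (k + 1), x => fun i => R k ((A k).mulVec (netOut m A b R k x) i + b k i)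



lemma wnorm_pos {m : ℕ} {w x : Fin m → ℝ} (hw : ∀ i, 0 < w i) (hx : x ≠ 0) :
    0 < wnorm w x := by
  obtain ⟨i, hi⟩ := Function.ne_iff.mp hx
  have h : 0 < w i * |x i| := mul_pos (hw i) (abs_pos.mpr hi)
  exact lt_of_lt_of_le h (Finset.single_le_sum
    (fun j _ => mul_nonneg (hw j).le (abs_nonneg _)) (Finset.mem_univ i))

lemma wnorm_nonneg {m : ℕ} {w : Fin m → ℝ} (hw : ∀ i, 0 ≤ w i) (x : Fin m → ℝ) :
    0 ≤ wnorm w x :=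
  Finset.sum_nonneg fun j _ => mul_nonneg (hw j) (abs_nonneg _)

lemma wnorm_mulVec_le {mk ml : ℕ} (A : Matrix (Fin ml) (Fin mk) ℝ)
    (wl : Fin ml → ℝ) (hwl : ∀ i, 0 ≤ wl i) (x : Fin mk → ℝ) :
    wnorm wl (A.mulVec x) ≤ ∑ j, (∑ i, wl i * |A i j|) * |x j| := by
  unfold wnorm
  have h1 : ∀ i, wl i * |A.mulVec x i| ≤ ∑ j, wl i * (|A i j| * |x j|) := by
    intro i
    rw [← Finset.mul_sum]
    refine mul_le_mul_of_nonneg_left ?_ (hwl i)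
    calc |A.mulVec x i| = |∑ j, A i j * x j| := rfl
      _ ≤ ∑ j, |A i j * x j| := Finset.abs_sum_le_sum_abs _ _
      _ = ∑ j, |A i j| * |x j| := by simp [abs_mul]
  calc ∑ i, wl i * |A.mulVec x i| ≤ ∑ i, ∑ j, wl i * (|A i j| * |x j|) :=
        Finset.sum_le_sum (fun i _ => h1 i)
    _ = ∑ j, (∑ i, wl i * |A i j|) * |x j| := by
        rw [Finset.sum_comm]
        refine Finset.sum_congr rfl fun j _ => ?_
        rw [Finset.sum_mul]
        refine Finset.sum_congr rfl fun i _ => by ring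

lemma single_mem {mk ml : ℕ} (A : Matrix (Fin ml) (Fin mk) ℝ) (wk : Fin mk → ℝ)
    (wl : Fin ml → ℝ) (j : Fin mk) :
    (∑ i, wl i * |A i j|) / wk j ∈
      {r : ℝ | ∃ x : Fin mk → ℝ, x ≠ 0 ∧ r = wnorm wl (A.mulVec x) / wnorm wk x} := by
  refine ⟨Pi.single j 1, ?_, ?_⟩
  · intro h
    have := congrFun h j
    simp [Pi.single_eq_same] at this
  · have h1 : A.mulVec (Pi.single j 1) = fun i => A i j := by
      ext i
      simp [Matrix.mulVec_single]
    have h2 : wnorm wk (Pi.single j 1) = wk j := by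
      unfold wnorm
      rw [Finset.sum_eq_single j]
      · simp
      · intro b _ hb; simp [Pi.single_eq_of_ne hb]
      · simp
    rw [h1, h2]
    rfl

lemma bddAbove_set {mk ml : ℕ} (A : Matrix (Fin ml) (Fin mk) ℝ) (wk : Fin mk → ℝ)
    (hwk : ∀ j, 0 < wk j) (wl : Fin ml → ℝ) (hwl : ∀ i, 0 ≤ wl i) (C : ℝ)
    (hC : ∀ j, (∑ i, wl i * |A i j|) ≤ C * wk j) :
    ∀ r ∈ {r : ℝ | ∃ x : Fin mk → ℝ, x ≠ 0 ∧ r = wnorm wl (A.mulVec x) / wnorm wk x},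
      r ≤ C := by
  rintro r ⟨x, hx, rfl⟩
  have hpos : 0 < wnorm wk x := wnorm_pos hwk hx
  rw [div_le_iff₀ hpos]
  calc wnorm wl (A.mulVec x) ≤ ∑ j, (∑ i, wl i * |A i j|) * |x j| :=
        wnorm_mulVec_le A wl hwl x
    _ ≤ ∑ j, (C * wk j) * |x j| :=
        Finset.sum_le_sum fun j _ => mul_le_mul_of_nonneg_right (hC j) (abs_nonneg _)
    _ = C * wnorm wk x := by
        unfold wnorm; rw [Finset.mul_sum]
        exact Finset.sum_congr rfl fun j _ => by ring

/-- Single-layer step of the optimal-weight algorithm: given positive output weights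
`wl` with positive weighted column sums `s j = Σ_i wl i |A i j|`, let `K = max_j s j`
and `wIn j = s j / K`. Then (a) `max_j wIn j = 1`; (b) the weighted operator norm of `A`
from `(ℝ^{mk}, wIn)` to `(ℝ^{ml}, wl)` equals `K`; and (c) for any other positive input
weights `wt`, `‖A‖_{wt} · wt j ≥ K · wIn j = s j` for every `j`. -/
theorem stmt_7 (mk ml : ℕ) (hk : 0 < mk) (A : Matrix (Fin ml) (Fin mk) ℝ)
    (wl : Fin ml → ℝ) (hwl : ∀ i, 0 < wl i)
    (s : Fin mk → ℝ) (hs : ∀ j, s j = ∑ i, wl i * |A i j|) (hspos : ∀ j, 0 < s j)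
    (K : ℝ) (hK : IsGreatest (Set.range s) K)
    (wIn : Fin mk → ℝ) (hwIn : ∀ j, wIn j = s j / K) :
    IsGreatest (Set.range wIn) 1 ∧
    opNormW wIn wl A = K ∧
    ∀ wt : Fin mk → ℝ, (∀ j, 0 < wt j) →
      ∀ j, K * wIn j ≤ opNormW wt wl A * wt j ∧ K * wIn j = s j := by

  obtain ⟨⟨j0, hj0⟩, hKub⟩ := hK
  have hKpos : 0 < K := hj0 ▸ hspos j0
  have hsle : ∀ j, s j ≤ K := fun j => hKub ⟨j, rfl⟩
  have hwInpos : ∀ j, 0 < wIn j := fun j => by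
    rw [hwIn j]; exact div_pos (hspos j) hKpos
  have hKwIn : ∀ j, K * wIn j = s j := fun j => by
    rw [hwIn j]; field_simp
  refine ⟨⟨⟨j0, by rw [hwIn j0, hj0, div_self hKpos.ne']⟩, ?_⟩, ?_, ?_⟩
  · rintro y ⟨j, rfl⟩
    rw [hwIn j]
    exact div_le_one_of_le₀ (hsle j) hKpos.le
  · unfold opNormW
    refine IsGreatest.csSup_eq ⟨?_, ?_⟩
    · have := single_mem A wIn wl j0
      rwa [← hs j0, hwIn j0, hj0, div_self hKpos.ne', div_one] at this
    · refine bddAbove_set A wIn (fun j => hwInpos j) wl (fun i => (hwl i).le) K ?_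
      intro j
      rw [← hs j, hKwIn j]
  · intro wt hwt j
    refine ⟨?_, hKwIn j⟩
    rw [hKwIn j]
    have hbdd : BddAbove {r : ℝ | ∃ x : Fin mk → ℝ, x ≠ 0 ∧
        r = wnorm wl (A.mulVec x) / wnorm wt x} := by
      haveI : Nonempty (Fin mk) := Fin.pos_iff_nonempty.mp hk
      have hne : (Finset.univ : Finset (Fin mk)).Nonempty := Finset.univ_nonempty
      refine ⟨Finset.univ.sup' hne (fun j => s j / wt j), ?_⟩
      refine bddAbove_set A wt hwt wl (fun i => (hwl i).le) _ ?_
      intro j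
      rw [← hs j, ← div_le_iff₀ (hwt j)]
      exact Finset.le_sup' (fun j => s j / wt j) (Finset.mem_univ j)
    have hmem := single_mem A wt wl j
    rw [← hs j] at hmem
    have := le_csSup hbdd hmem
    calc s j = (s j / wt j) * wt j := (div_mul_cancel₀ _ (hwt j).ne').symm
      _ ≤ opNormW wt wl A * wt j :=
        mul_le_mul_of_nonneg_right this (hwt j).le
end

section
/- Analogously, any logarithmic RASM V (i.e., V ≤ 0 on 𝒳₀ and V ≥ log(1/(1-ρ)) on 𝒳_U, Lipschitz with constant L_V in 1-norm) satisfies L_V ≥ (1/dist(𝒳₀, 𝒳_U)) · log(1/(1-ρ)), and for all ρ ∈ (0,1) this lower bound is strictly smaller than the corresponding RASM lower bound (1/dist(𝒳₀, 𝒳_U)) · (1/(1-ρ) - 1). -/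
/-- Lower bound on the Lipschitz constant of any logRASM: if `V ≤ 0` on `X₀`,
`V ≥ log(1/(1-ρ))` on `X_U`, and `V` is `L_V`-Lipschitz (1-norm) on `X ⊇ X₀ ∪ X_U`,
with `X₀, X_U` nonempty and at positive 1-norm distance `D`, then
`L_V ≥ (1/D)·log(1/(1-ρ))`, and this lower bound is strictly smaller than the
corresponding RASM lower bound `(1/D)·(1/(1-ρ) - 1)`. -/
theorem stmt_18 (d : ℕ) (ρ LV : ℝ) (hρ0 : 0 < ρ) (hρ1 : ρ < 1)
    (X X₀ XU : Set (Fin d → ℝ)) (hX₀ne : X₀.Nonempty) (hXUne : XU.Nonempty)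
    (hsub : X₀ ∪ XU ⊆ X)
    (V : (Fin d → ℝ) → ℝ)
    (hinit : ∀ x ∈ X₀, V x ≤ 0)
    (hsafe : ∀ x ∈ XU, Real.log (1 / (1 - ρ)) ≤ V x)
    (hLip : ∀ x ∈ X, ∀ y ∈ X, |V x - V y| ≤ LV * ∑ i, |x i - y i|)
    (D : ℝ)
    (hD : D = sInf {r : ℝ | ∃ x₀ ∈ X₀, ∃ xu ∈ XU, r = ∑ i, |x₀ i - xu i|})
    (hDpos : 0 < D) :
    (1 / D) * Real.log (1 / (1 - ρ)) ≤ LV ∧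
    (1 / D) * Real.log (1 / (1 - ρ)) < (1 / D) * (1 / (1 - ρ) - 1) := by
  have h1ρ : 0 < 1 - ρ := by linarith
  set y : ℝ := 1 / (1 - ρ) with hy
  have hy1 : 1 < y := by
    rw [hy, lt_div_iff₀ h1ρ]; linarith
  have hlogpos : 0 < Real.log y := Real.log_pos hy1
  -- key bound for every distance value
  have key : ∀ x₀ ∈ X₀, ∀ xu ∈ XU, Real.log y ≤ LV * ∑ i, |x₀ i - xu i| := by
    intro x₀ hx₀ xu hxu
    have h := hLip x₀ (hsub (Or.inl hx₀)) xu (hsub (Or.inr hxu))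
    have h1 := hinit x₀ hx₀
    have h2 := hsafe xu hxu
    have : Real.log y ≤ |V x₀ - V xu| := by
      have : Real.log y ≤ V xu - V x₀ := by linarith
      calc Real.log y ≤ V xu - V x₀ := this
        _ ≤ |V xu - V x₀| := le_abs_self _
        _ = |V x₀ - V xu| := abs_sub_comm _ _
    linarith
  obtain ⟨x₀, hx₀⟩ := hX₀ne
  obtain ⟨xu, hxu⟩ := hXUne
  have hr0 : (∑ i, |x₀ i - xu i|) ∈ {r : ℝ | ∃ x₀ ∈ X₀, ∃ xu ∈ XU, r = ∑ i, |x₀ i - xu i|} :=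
    ⟨x₀, hx₀, xu, hxu, rfl⟩
  have hrnn : 0 ≤ ∑ i, |x₀ i - xu i| := Finset.sum_nonneg fun i _ => abs_nonneg _
  have hLVpos : 0 < LV := by
    have h := key x₀ hx₀ xu hxu
    by_contra hle
    push_neg at hle
    nlinarith
  have hDge : Real.log y / LV ≤ D := by
    rw [hD]
    apply le_csInf ⟨_, hr0⟩
    rintro r ⟨a, ha, b, hb, rfl⟩
    rw [div_le_iff₀ hLVpos]
    calc Real.log y ≤ LV * ∑ i, |a i - b i| := key a ha b hb
      _ = (∑ i, |a i - b i|) * LV := mul_comm _ _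
  constructor
  · rw [one_div, inv_mul_le_iff₀ hDpos]
    calc Real.log y = Real.log y / LV * LV := by field_simp
      _ ≤ D * LV := by exact mul_le_mul_of_nonneg_right hDge hLVpos.le
  · apply mul_lt_mul_of_pos_left _ (by positivity : (0:ℝ) < 1 / D)
    exact Real.log_lt_sub_one_of_pos (by linarith) (by linarith)
end
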